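/- For every rational number x ∈ ℚ (viewed in ℚ_p), f(x) lies in ℤ[1/p], assuming that for every rational x there exists n ∈ ℕ with τ^n(x) = 0 or τ^n(x) = -p. -/

import Mathlib

open scoped Classical in
noncomputable def eps {p : ℕ} [Fact p.Prime] (x : ℚ_[p]) : ℚ_[p] :=
  if x = 0 then 1 else (p : ℚ_[p]) ^ (-x.valuation) * x

noncomputable def fdigit {p : ℕ} [Fact p.Prime] (x : ℚ_[p]) : ℕ :=
  if h : ‖x‖ ≤ 1 then ((PadicInt.toZMod (⟨x, h⟩ : ℤ_[p])).val) else 0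

noncomputable def tau {p : ℕ} [Fact p.Prime] (x : ℚ_[p]) : ℚ_[p] :=
  1 / eps x - (fdigit (1 / eps x) : ℚ_[p])

noncomputable def sigma {p : ℕ} [Fact p.Prime] (x : ℚ_[p]) : ℚ_[p] :=
  eps x - (fdigit (eps x) : ℚ_[p])

/-- `f(x) = Σ_{n=0}^∞ ⌊1/ε(τⁿ x)⌋_p ∏_{m=0}^n τᵐ x / ε(τᵐ x)` -/
noncomputable def schneiderF {p : ℕ} [Fact p.Prime] (x : ℚ_[p]) : ℚ_[p] :=
  ∑' n : ℕ, (fdigit (1 / eps (tau^[n] x)) : ℚ_[p]) *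
    ∏ m ∈ Finset.range (n + 1), (tau^[m] x) / eps (tau^[m] x)

/-- Finite continued fraction `b 0 / (a 0 + b 1 / (a 1 + ⋯ + b n / (a n + x)))`. -/
noncomputable def cf {p : ℕ} [Fact p.Prime] : (ℕ → ℚ_[p]) → (ℕ → ℚ_[p]) → ℕ → ℚ_[p] → ℚ_[p]
  | a, b, 0, x => b 0 / (a 0 + x)
  | a, b, n + 1, x => b 0 / (a 0 + cf (fun i => a (i + 1)) (fun i => b (i + 1)) n x)

section Aux
variable {p : ℕ} [hp : Fact p.Prime]

lemma pQ_ne_zero : (p : ℚ_[p]) ≠ 0 := Nat.cast_ne_zero.mpr hp.out.ne_zero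

lemma eps_zero : eps (0:ℚ_[p]) = 1 := if_pos rfl

lemma eps_ne_zero (y : ℚ_[p]) : eps y ≠ 0 := by
  unfold eps; split
  · exact one_ne_zero
  · exact mul_ne_zero (zpow_ne_zero _ pQ_ne_zero) ‹_›

lemma div_eps (y : ℚ_[p]) (hy : y ≠ 0) : y / eps y = (p : ℚ_[p]) ^ y.valuation := by
  unfold eps
  rw [if_neg hy, zpow_neg]
  field_simp

lemma fdigit_one : fdigit (1 : ℚ_[p]) = 1 := by
  have h : ‖(1:ℚ_[p])‖ ≤ 1 := by simp
  rw [fdigit, dif_pos h]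
  have h2 : (⟨(1:ℚ_[p]), h⟩ : ℤ_[p]) = (1 : ℤ_[p]) := Subtype.ext rfl
  rw [h2, map_one]
  haveI : Fact (1 < p) := ⟨hp.out.one_lt⟩
  exact ZMod.val_one p

lemma fdigit_neg_one : fdigit (-1 : ℚ_[p]) = p - 1 := by
  have h : ‖(-1:ℚ_[p])‖ ≤ 1 := by simp
  rw [fdigit, dif_pos h]
  have h2 : (⟨(-1:ℚ_[p]), h⟩ : ℤ_[p]) = (-1 : ℤ_[p]) := Subtype.ext rfl
  rw [h2, map_neg, map_one]
  obtain ⟨q, rfl⟩ : ∃ q, p = q + 1 := ⟨p - 1, (Nat.succ_pred_eq_of_pos hp.out.pos).symm⟩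
  simpa using ZMod.val_neg_one q

lemma tau_zero : tau (0:ℚ_[p]) = 0 := by
  simp [tau, eps_zero, fdigit_one]

lemma val_neg_p : (-(p:ℚ_[p])).valuation = 1 := by
  have h : (-(p:ℚ_[p])) = (-1) * p := by ring
  have h1 : ((-1 : ℤ) : ℚ_[p]).valuation = 0 := by
    rw [Padic.valuation_intCast]; simp [padicValInt]
  push_cast at h1
  rw [h, Padic.valuation_mul (by norm_num) pQ_ne_zero, h1, Padic.valuation_p]
  ring

lemma eps_neg_p : eps (-(p:ℚ_[p])) = -1 := by
  rw [eps, if_neg (by simpa using pQ_ne_zero), val_neg_p]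
  have : ((1:ℤ) : ℤ) = 1 := rfl
  rw [show (-(1:ℤ)) = -1 from rfl, zpow_neg, zpow_one]
  field_simp
  rw [div_self pQ_ne_zero]

lemma tau_neg_p : tau (-(p:ℚ_[p])) = -(p:ℚ_[p]) := by
  rw [tau, eps_neg_p]
  have h1 : (1:ℚ_[p]) / (-1) = -1 := by norm_num
  rw [h1, fdigit_neg_one, Nat.cast_sub hp.out.one_le]
  push_cast
  ring

end Aux

section InA
variable {p : ℕ} [hp : Fact p.Prime]

def inA (z : ℚ_[p]) : Prop := ∃ a : ℤ, ∃ k : ℕ, z = (a:ℚ_[p]) / (p:ℚ_[p])^k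

lemma inA_zero : inA (0:ℚ_[p]) := ⟨0, 0, by simp⟩

lemma inA_natCast (n : ℕ) : inA ((n:ℚ_[p])) := ⟨n, 0, by simp⟩

lemma inA_add {x y : ℚ_[p]} (hx : inA x) (hy : inA y) : inA (x+y) := by
  obtain ⟨a, k, rfl⟩ := hx; obtain ⟨b, l, rfl⟩ := hy
  refine ⟨a * p^l + b * p^k, k + l, ?_⟩
  have h0 := pQ_ne_zero (p := p)
  push_cast
  rw [div_add_div _ _ (pow_ne_zero k h0) (pow_ne_zero l h0), pow_add]
  ring

lemma inA_mul {x y : ℚ_[p]} (hx : inA x) (hy : inA y) : inA (x*y) := by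
  obtain ⟨a, k, rfl⟩ := hx; obtain ⟨b, l, rfl⟩ := hy
  refine ⟨a * b, k + l, ?_⟩
  push_cast
  rw [div_mul_div_comm, pow_add]

lemma inA_neg {x : ℚ_[p]} (hx : inA x) : inA (-x) := by
  obtain ⟨a, k, rfl⟩ := hx
  exact ⟨-a, k, by push_cast; rw [neg_div]⟩

lemma inA_zpow (v : ℤ) : inA ((p:ℚ_[p])^v) := by
  rcases le_or_gt 0 v with h | h
  · refine ⟨(p:ℤ)^v.toNat, 0, ?_⟩
    push_cast
    rw [pow_zero, div_one, ← zpow_natCast, Int.toNat_of_nonneg h]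
  · refine ⟨1, (-v).toNat, ?_⟩
    rw [Int.cast_one, ← zpow_natCast, Int.toNat_of_nonneg (by omega), one_div, ← zpow_neg,
      neg_neg]

lemma inA_prod {s : Finset ℕ} {f : ℕ → ℚ_[p]} (h : ∀ i ∈ s, inA (f i)) :
    inA (∏ i ∈ s, f i) := by
  classical
  induction s using Finset.induction with
  | empty => simpa using inA_natCast 1
  | insert _ _ hi ih =>
    rw [Finset.prod_insert hi]
    exact inA_mul (h _ (Finset.mem_insert_self _ _))
      (ih fun i hi' => h i (Finset.mem_insert_of_mem hi'))

lemma inA_sum {s : Finset ℕ} {f : ℕ → ℚ_[p]} (h : ∀ i ∈ s, inA (f i)) :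
    inA (∑ i ∈ s, f i) := by
  classical
  induction s using Finset.induction with
  | empty => simpa using inA_zero
  | insert _ _ hi ih =>
    rw [Finset.sum_insert hi]
    exact inA_add (h _ (Finset.mem_insert_self _ _))
      (ih fun i hi' => h i (Finset.mem_insert_of_mem hi'))

lemma inA_div_eps (y : ℚ_[p]) : inA (y / eps y) := by
  rcases eq_or_ne y 0 with rfl | hy
  · simpa using inA_zero
  · rw [div_eps y hy]; exact inA_zpow _

end InA

section Main
variable {p : ℕ} [hp : Fact p.Prime]

lemma tau_iter_zero (k : ℕ) : tau^[k] (0:ℚ_[p]) = 0 := by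
  induction k with
  | zero => rfl
  | succ k ih => rw [Function.iterate_succ_apply', ih, tau_zero]

lemma tau_iter_neg_p (k : ℕ) : tau^[k] (-(p:ℚ_[p])) = -(p:ℚ_[p]) := by
  induction k with
  | zero => rfl
  | succ k ih => rw [Function.iterate_succ_apply', ih, tau_neg_p]

end Main

theorem schneiderF_rat_mem (p : ℕ) [Fact p.Prime]
    (H : ∀ x : ℚ, ∃ n : ℕ, tau^[n] ((x : ℚ_[p])) = 0 ∨ tau^[n] ((x : ℚ_[p])) = -(p : ℚ_[p]))
    (x : ℚ) :
    ∃ (a : ℤ) (k : ℕ), schneiderF ((x : ℚ_[p])) = (a : ℚ_[p]) / (p : ℚ_[p]) ^ k := by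
  have hp : Fact p.Prime := ‹_›
  obtain ⟨N, hN⟩ := H x
  set X : ℚ_[p] := (x : ℚ_[p]) with hX
  set f : ℕ → ℚ_[p] := fun n => (fdigit (1 / eps (tau^[n] X)) : ℚ_[p]) *
    ∏ m ∈ Finset.range (n + 1), (tau^[m] X) / eps (tau^[m] X) with hf
  have hsch : schneiderF X = ∑' n, f n := rfl
  have hterm : ∀ n, inA (f n) := fun n =>
    inA_mul (inA_natCast _) (inA_prod fun m _ => inA_div_eps _)
  rcases hN with h0 | hmp
  · -- case τ^N x = 0
    have hz : ∀ k, tau^[N + k] X = 0 := by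
      intro k
      rw [add_comm, Function.iterate_add_apply, h0, tau_iter_zero]
    have hvanish : ∀ n ∉ Finset.range N, f n = 0 := by
      intro n hn
      rw [Finset.mem_range, not_lt] at hn
      have hNn : tau^[N] X / eps (tau^[N] X) = 0 := by
        rw [h0, zero_div]
      have : ∏ m ∈ Finset.range (n + 1), (tau^[m] X) / eps (tau^[m] X) = 0 :=
        Finset.prod_eq_zero (Finset.mem_range.mpr (by omega)) hNn
      rw [hf]
      simp only [this, mul_zero]
    rw [hsch, tsum_eq_sum hvanish]
    exact inA_sum fun n _ => hterm n
  · -- case τ^N x = -p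
    have hfix : ∀ k, tau^[N + k] X = -(p:ℚ_[p]) := by
      intro k
      rw [add_comm, Function.iterate_add_apply, hmp, tau_iter_neg_p]
    set C : ℚ_[p] := ∏ m ∈ Finset.range N, (tau^[m] X) / eps (tau^[m] X) with hC
    set c : ℚ_[p] := ((p:ℚ_[p]) - 1) * C * p with hc
    have hgN : ∀ k, (tau^[N + k] X) / eps (tau^[N + k] X) = (p:ℚ_[p]) := by
      intro k
      rw [hfix k, eps_neg_p, div_neg, div_one, neg_neg]
    have hdig : (fdigit (-1 : ℚ_[p]) : ℚ_[p]) = (p:ℚ_[p]) - 1 := by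
      rw [fdigit_neg_one, Nat.cast_sub hp.out.one_le, Nat.cast_one]
    have hfN : ∀ j, f (N + j) = c * (p:ℚ_[p])^j := by
      intro j
      rw [hf]
      simp only
      have h1 : (1:ℚ_[p]) / eps (tau^[N + j] X) = -1 := by
        rw [hfix j, eps_neg_p]; norm_num
      rw [h1, hdig]
      have h2 : N + j + 1 = N + (j + 1) := by ring
      rw [h2, Finset.prod_range_add, ← hC]
      have h3 : ∏ i ∈ Finset.range (j + 1), (tau^[N + i] X) / eps (tau^[N + i] X)
          = (p:ℚ_[p]) ^ (j + 1) := by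
        rw [Finset.prod_congr rfl fun i _ => hgN i, Finset.prod_const, Finset.card_range]
      rw [h3, hc, pow_succ]
      ring
    have hgeom : Summable (fun j : ℕ => (p:ℚ_[p])^j) :=
      summable_geometric_of_norm_lt_one Padic.norm_p_lt_one
    have htail_eq : (fun j => f (j + N)) = fun j => c * (p:ℚ_[p])^j := by
      funext j; rw [add_comm, hfN]
    have hsum_tail : Summable (fun j => f (j + N)) := by
      rw [htail_eq]; exact hgeom.mul_left c
    have hsum : Summable f := (summable_nat_add_iff N).mp hsum_tail
    have h1p : (1:ℚ_[p]) - p ≠ 0 := by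
      rw [sub_ne_zero]
      intro h
      have : (1:ℕ) = p := by exact_mod_cast h
      exact hp.out.one_lt.ne' this.symm
    have htail : ∑' j, f (j + N) = -(C * p) := by
      rw [htail_eq, tsum_mul_left, tsum_geometric_of_norm_lt_one Padic.norm_p_lt_one, hc]
      field_simp
      ring
    rw [hsch, ← Summable.sum_add_tsum_nat_add' hsum_tail, htail]
    exact inA_add (inA_sum fun n _ => hterm n)
      (inA_neg (inA_mul (inA_prod fun m _ => inA_div_eps _) (inA_natCast p)))
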